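/- arXiv:2007.06455 — 4 statements merged into one kernel-verified Lean document; each statement's English description precedes it below -/
import Mathlib

section
/- For any graph U, any integer m ≥ 0, and any h ≤ χ₂(U), the (h,m)-boost U^{(h,m)} of U satisfies χ₂(U^{(h,m)}) ≥ hm + 1. -/
/-!
Let `φ` be a 2-ranking of `U^{(h,m)}` with colours in `[1, k]`, `k ≤ hm`. Starting from the
root we find, in every layer `i ≤ m`, a vertex `a` with `φ a + h i ≤ k`. Indeed, the vertices
of the `hm + 1` child copies of `a` are pairwise joined by paths of length 2 through `a`, so
the copies containing a colour above `φ a` use pairwise distinct colours in `(φ a, k]`; hence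
some copy has all its colours below `φ a`. That copy is a 2-ranking of `U`, so it needs at least
`h` colours and contains a vertex of colour at most `φ a - h`. In layer `m` this gives
`1 + hm ≤ k`, a contradiction.
-/

open SimpleGraph

def IsLRanking {V : Type*} (G : SimpleGraph V) (ℓ : ℕ) (φ : V → ℕ) : Prop :=
  ∀ ⦃u v : V⦄ (p : G.Walk u v), p.IsPath → 1 ≤ p.length → p.length ≤ ℓ →
    φ u ≠ φ v ∨ ∃ w ∈ p.support, φ u < φ w

noncomputable def rankingNumber {V : Type*} (G : SimpleGraph V) (ℓ : ℕ) : ℕ :=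
  sInf {k | ∃ φ : V → ℕ, IsLRanking G ℓ φ ∧ ∀ v, φ v ∈ Finset.Icc 1 k}


/-- The `(h,m)`-boost of `U`.  Vertices are sequences recording, for each ancestor step,
which of the `h*m+1` copies of `U` was entered and at which vertex of `U`; the empty list
is the root `a₀` (the single vertex of layer `L₀`), and lists of length `i ≤ m` are the
vertices of layer `L_i`.  A vertex is adjacent to every vertex of each of its child
copies, and two vertices in the same copy are adjacent iff they are adjacent in `U`. -/
def boost {α : Type*} (U : SimpleGraph α) (h m : ℕ) :
    SimpleGraph {l : List (Fin (h * m + 1) × α) // l.length ≤ m} where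
  Adj x y :=
    (∃ p, y.1 = x.1 ++ [p]) ∨ (∃ p, x.1 = y.1 ++ [p]) ∨
      (∃ (l : List (Fin (h * m + 1) × α)) (p q : Fin (h * m + 1) × α),
        x.1 = l ++ [p] ∧ y.1 = l ++ [q] ∧ p.1 = q.1 ∧ U.Adj p.2 q.2)
  symm := by
    constructor
    rintro x y (⟨p, hp⟩ | ⟨p, hp⟩ | ⟨l, p, q, h1, h2, h3, h4⟩)
    · exact Or.inr (Or.inl ⟨p, hp⟩)
    · exact Or.inl ⟨p, hp⟩
    · exact Or.inr (Or.inr ⟨l, q, p, h2, h1, h3.symm, h4.symm⟩)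
  loopless := by
    constructor
    rintro x (⟨p, hp⟩ | ⟨p, hp⟩ | ⟨l, p, q, h1, h2, h3, h4⟩)
    · have := congrArg List.length hp; simp at this
    · have := congrArg List.length hp; simp at this
    · rw [h1] at h2
      have : p = q := by
        have := List.append_inj_right h2 rfl
        simpa using this
      exact h4.ne (congrArg Prod.snd this)



namespace IsLRanking

variable {V W : Type*} {G : SimpleGraph V} {ℓ : ℕ} {φ : V → ℕ}

lemma of_lt_iff {ψ : V → ℕ} (hφ : IsLRanking G ℓ φ) (hψ : ∀ u v, φ u < φ v ↔ ψ u < ψ v) :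
    IsLRanking G ℓ ψ := by
  intro u v p hp h1 h2
  rcases hφ p hp h1 h2 with hne | ⟨w, hw, hlt⟩
  · have := hψ u v; have := hψ v u
    exact Or.inl (by omega)
  · exact Or.inr ⟨w, hw, (hψ u w).1 hlt⟩

lemma comap {G' : SimpleGraph W} (f : G' →g G) (hf : Function.Injective f)
    (hφ : IsLRanking G ℓ φ) : IsLRanking G' ℓ (φ ∘ f) := by
  intro u v p hp h1 h2
  rcases hφ (p.map f) (hp.map hf) (by rwa [Walk.length_map]) (by rwa [Walk.length_map]) with
    hne | ⟨w, hw, hlt⟩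
  · exact Or.inl hne
  · obtain ⟨w', hw', rfl⟩ := List.mem_map.1 ((Walk.support_map f p) ▸ hw)
    exact Or.inr ⟨w', hw', hlt⟩

lemma of_injective (hφ : Function.Injective φ) : IsLRanking G ℓ φ := by
  intro u v p hp h1 _
  refine Or.inl fun huv => ?_
  have := hp.nil_iff_eq.2 (hφ huv)
  rw [← Walk.length_eq_zero_iff] at this
  omega

lemma ne_of_adj (hφ : IsLRanking G ℓ φ) (hℓ : 1 ≤ ℓ) {u v : V} (huv : G.Adj u v) :
    φ u ≠ φ v := by
  rcases hφ huv.toWalk huv.isPath_toWalk (by simp) (by simpa) with hne | ⟨w, hw, hlt⟩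
  · exact hne
  · simp only [Adj.toWalk, Walk.support_cons, Walk.support_nil, List.mem_cons,
      List.not_mem_nil, or_false] at hw
    rcases hw with rfl | rfl <;> omega

lemma lt_of_adj_of_adj (hφ : IsLRanking G ℓ φ) (hℓ : 2 ≤ ℓ) {u w v : V} (huw : G.Adj u w)
    (hwv : G.Adj w v) (huv : u ≠ v) (hφuv : φ u = φ v) : φ u < φ w := by
  have hp : (Walk.cons huw hwv.toWalk).IsPath := by simp [hwv.ne, huw.ne, huv]
  rcases hφ _ hp (by simp) (by simpa) with hne | ⟨x, hx, hlt⟩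
  · exact absurd hφuv hne
  · simp only [Adj.toWalk, Walk.support_cons, Walk.support_nil, List.mem_cons,
      List.not_mem_nil, or_false] at hx
    rcases hx with rfl | rfl | rfl <;> omega

/-- Neighbours of `a` with colours above `φ a` have pairwise distinct colours. -/
lemma card_le_of_forall_adj {J : Type*} [Fintype J] (hφ : IsLRanking G 2 φ) {k : ℕ}
    (hk : ∀ v, φ v ≤ k) {a : V} {y : J → V} (hy : Function.Injective y)
    (hadj : ∀ j, G.Adj a (y j)) (hlt : ∀ j, φ a < φ (y j)) : Fintype.card J ≤ k - φ a := by
  have := Finset.card_le_card_of_injOn (fun j => φ (y j)) (s := Finset.univ)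
    (t := Finset.Ioc (φ a) k) (fun j _ => by simpa using ⟨hlt j, hk (y j)⟩) fun i _ j _ hij => by
      by_contra hne
      have := hφ.lt_of_adj_of_adj le_rfl (hadj i).symm (hadj j) (hy.ne hne) hij
      exact lt_asymm (hlt i) this
  simpa using this

end IsLRanking

section rankingNumber

variable {V : Type*} {G : SimpleGraph V} {ℓ : ℕ}

lemma rankingNumber_le_of_forall_mem_Icc {ψ : V → ℕ} {c b : ℕ} (hψ : IsLRanking G ℓ ψ)
    (hψcb : ∀ v, ψ v ∈ Set.Icc c b) : rankingNumber G ℓ ≤ b + 1 - c := by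
  refine Nat.sInf_le ⟨fun v => ψ v + 1 - c, hψ.of_lt_iff fun u v => ?_, fun v => ?_⟩
  · have := (hψcb u).1; have := (hψcb v).1
    omega
  · have := hψcb v
    simp only [Set.mem_Icc, Finset.mem_Icc] at this ⊢
    omega

lemma rankingNumber_eq_zero [IsEmpty V] : rankingNumber G ℓ = 0 :=
  Nat.eq_zero_of_le_zero <| Nat.sInf_le ⟨isEmptyElim, fun u => isEmptyElim u, isEmptyElim⟩

lemma le_rankingNumber [Finite V] {n : ℕ}
    (H : ∀ φ k, IsLRanking G ℓ φ → (∀ v, φ v ∈ Finset.Icc 1 k) → n ≤ k) :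
    n ≤ rankingNumber G ℓ := by
  obtain ⟨N, ⟨e⟩⟩ := Finite.exists_equiv_fin V
  have hne : {k | ∃ φ : V → ℕ, IsLRanking G ℓ φ ∧ ∀ v, φ v ∈ Finset.Icc 1 k}.Nonempty :=
    ⟨N, fun v => e v + 1,
      IsLRanking.of_injective fun u v huv => e.injective (Fin.ext (by simpa using huv)),
      fun v => by simp [Nat.succ_le_of_lt (e v).isLt]⟩
  exact le_csInf hne fun k ⟨φ, hφ, hk⟩ => H φ k hφ hk

end rankingNumber

abbrev BoostVertex (α : Type*) (h m : ℕ) := {l : List (Fin (h * m + 1) × α) // l.length ≤ m}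

section boost

variable {α : Type*} {U : SimpleGraph α} {h m : ℕ}

instance [Finite α] : Finite (BoostVertex α h m) :=
  (List.finite_length_le _ m).to_subtype

def boostChild (a : BoostVertex α h m) (ha : a.1.length < m) (j : Fin (h * m + 1)) (v : α) :
    BoostVertex α h m :=
  ⟨a.1 ++ [(j, v)], by simpa using ha⟩

section child

variable {a : BoostVertex α h m} {ha : a.1.length < m}

@[simp]
lemma length_boostChild (j : Fin (h * m + 1)) (v : α) :
    (boostChild a ha j v).1.length = a.1.length + 1 := by
  simp [boostChild]

lemma boostChild_inj {j j' : Fin (h * m + 1)} {u v : α} :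
    boostChild a ha j u = boostChild a ha j' v ↔ j = j' ∧ u = v := by
  simp [boostChild, Subtype.ext_iff]

lemma boostChild_injective (j : Fin (h * m + 1)) : Function.Injective (boostChild a ha j) :=
  fun _ _ huv => (boostChild_inj.1 huv).2

lemma boost_adj_boostChild (j : Fin (h * m + 1)) (v : α) :
    (boost U h m).Adj a (boostChild a ha j v) :=
  Or.inl ⟨_, rfl⟩

lemma boost_adj_boostChild_boostChild {j : Fin (h * m + 1)} {u v : α} (huv : U.Adj u v) :
    (boost U h m).Adj (boostChild a ha j u) (boostChild a ha j v) :=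
  Or.inr (Or.inr ⟨a.1, (j, u), (j, v), rfl, rfl, rfl, huv⟩)

end child

variable {φ : BoostVertex α h m → ℕ} {k : ℕ}

lemma exists_forall_boostChild_lt (hφ : IsLRanking (boost U h m) 2 φ) (hk : ∀ x, φ x ≤ k)
    (hkm : k ≤ h * m) (a : BoostVertex α h m) (ha : a.1.length < m) :
    ∃ j, ∀ v, φ (boostChild a ha j v) < φ a := by
  by_contra! hbig
  choose v hv using hbig
  have hcard := hφ.card_le_of_forall_adj hk (y := fun j => boostChild a ha j (v j))
    (fun i j hij => (boostChild_inj.1 hij).1) (fun j => boost_adj_boostChild j (v j))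
    fun j => (hv j).lt_of_ne (hφ.ne_of_adj one_le_two (boost_adj_boostChild j (v j)))
  rw [Fintype.card_fin] at hcard
  omega

lemma exists_boostChild_add_le [Finite α] [Nonempty α] (hh : h ≤ rankingNumber U 2)
    (hφ : IsLRanking (boost U h m) 2 φ) (hk : ∀ x, φ x ≤ k) (hkm : k ≤ h * m)
    (a : BoostVertex α h m) (ha : a.1.length < m) :
    ∃ j v, φ (boostChild a ha j v) + h ≤ φ a := by
  obtain ⟨j, hj⟩ := exists_forall_boostChild_lt hφ hk hkm a ha
  have hψ : IsLRanking U 2 (φ ∘ boostChild a ha j) :=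
    hφ.comap ⟨boostChild a ha j, boost_adj_boostChild_boostChild⟩
      (boostChild_injective (ha := ha) j)
  obtain ⟨v, hv⟩ := Finite.exists_min (φ ∘ boostChild a ha j)
  have hrank := rankingNumber_le_of_forall_mem_Icc hψ (b := φ a - 1)
    fun w => ⟨hv w, Nat.le_sub_one_of_lt (hj w)⟩
  have := hj v
  exact ⟨j, v, by simp only [Function.comp_apply] at hrank; omega⟩

lemma exists_boostVertex_add_mul_le [Finite α] [Nonempty α] (hh : h ≤ rankingNumber U 2)
    (hφ : IsLRanking (boost U h m) 2 φ) (hk : ∀ x, φ x ≤ k) (hkm : k ≤ h * m) :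
    ∀ i ≤ m, ∃ x : BoostVertex α h m, x.1.length = i ∧ φ x + h * i ≤ k
  | 0, _ => ⟨⟨[], by simp⟩, rfl, by simpa using hk _⟩
  | i + 1, hi => by
    obtain ⟨a, rfl, ha⟩ := exists_boostVertex_add_mul_le hh hφ hk hkm i (by omega)
    obtain ⟨j, v, hv⟩ := exists_boostChild_add_le hh hφ hk hkm a (by omega)
    exact ⟨boostChild a _ j v, length_boostChild j v, by rw [Nat.mul_succ]; omega⟩

end boost

/-- If `h ≤ χ₂(U)` then `χ₂(U^{(h,m)}) ≥ h·m + 1`. -/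
theorem boost_ranking_lower_bound {α : Type*} [Fintype α] (U : SimpleGraph α)
    (h m : ℕ) (hh : h ≤ rankingNumber U 2) :
    h * m + 1 ≤ rankingNumber (boost U h m) 2 := by
  refine le_rankingNumber fun φ k hφ hk => ?_
  by_contra! hkm
  have hφ1 (x) : 1 ≤ φ x := (Finset.mem_Icc.1 (hk x)).1
  have hφk (x) : φ x ≤ k := (Finset.mem_Icc.1 (hk x)).2
  have : Nonempty α := by
    by_contra hα
    rw [not_nonempty_iff] at hα
    obtain rfl : h = 0 := Nat.le_zero.1 (rankingNumber_eq_zero (G := U) ▸ hh)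
    have := (hφ1 ⟨[], by simp⟩).trans (hφk _)
    omega
  obtain ⟨x, -, hx⟩ := exists_boostVertex_add_mul_le hh hφ hφk (by omega) m le_rfl
  have := hφ1 x
  omega
end

section
/- For any graph G and any integer ℓ ≥ 1, χ_ℓ(G) ≤ (ℓ+1)·pw(G) + 1, where pw(G) denotes the pathwidth of G. -/
open SimpleGraph

/-- A tree decomposition (more generally, an `X`-decomposition) of `G` indexed by the
vertices of a graph `T`: each vertex's set of bags induces a connected subgraph of `T`,
and each edge of `G` is contained in some bag. -/
structure TreeDecomp {V X : Type*} (G : SimpleGraph V) (T : SimpleGraph X) where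
  bag : X → Set V
  subtree : ∀ v : V, (T.induce {x | v ∈ bag x}).Connected
  covers : ∀ ⦃u v : V⦄, G.Adj u v → ∃ x, u ∈ bag x ∧ v ∈ bag x

/-- `G` has a tree decomposition of width at most `t`. -/
def HasTreewidthAtMost {V : Type*} (G : SimpleGraph V) (t : ℕ) : Prop :=
  ∃ (X : Type) (T : SimpleGraph X), T.IsTree ∧
    ∃ D : TreeDecomp G T, ∀ x, (D.bag x).ncard ≤ t + 1

/-- The treewidth of `G`. -/
noncomputable def treewidth {V : Type*} (G : SimpleGraph V) : ℕ :=
  sInf {t | HasTreewidthAtMost G t}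

/-- `G` has a path decomposition (a tree decomposition whose underlying tree is a path)
of width at most `t`. -/
def HasPathwidthAtMost {V : Type*} (G : SimpleGraph V) (t : ℕ) : Prop :=
  ∃ (n : ℕ) (D : TreeDecomp G (SimpleGraph.pathGraph n)),
    ∀ x, (D.bag x).ncard ≤ t + 1

/-- The pathwidth of `G`. -/
noncomputable def pathwidth {V : Type*} (G : SimpleGraph V) : ℕ :=
  sInf {t | HasPathwidthAtMost G t}

/-!
Replace each vertex by the interval of positions of its bags in a path decomposition: adjacent
vertices get overlapping intervals and every point lies in at most `pw(G) + 1` intervals.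
Build a greedy chain `s₀, s₁, …` of intervals, `s_{k+1}` reaching furthest right among the
intervals containing the first start after the end of `s_k`. Removing the chain lowers the width
by one: the bag at a point missed by the chain, together with the last chain interval starting
before that point, fits into the bag at that interval's right end. The level of a vertex, the
index of the first chain interval reaching at least as far right, grows by at most one along an
edge, so chain vertices whose levels agree modulo `ℓ + 1` are more than `ℓ` apart. Colour `s_k`
by `k mod (ℓ + 1)` above all colours used, recursively, on the remaining vertices; a path between
two remaining vertices either stays among them or meets a larger colour.
-/

open Finset

section

variable {V : Type*}

def IsLRankingOn (G : SimpleGraph V) (ℓ : ℕ) (A : Finset V) (φ : V → ℕ) : Prop :=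
  ∀ ⦃u v : V⦄ (p : G.Walk u v), p.IsPath → 1 ≤ p.length → p.length ≤ ℓ →
    (∀ w ∈ p.support, w ∈ A) → φ u ≠ φ v ∨ ∃ w ∈ p.support, φ u < φ w

namespace IsLRankingOn

variable {G : SimpleGraph V} {ℓ : ℕ} {A : Finset V}

lemma isLRanking [Fintype V] {φ : V → ℕ} (h : IsLRankingOn G ℓ univ φ) : IsLRanking G ℓ φ :=
  fun _ _ p hp h₁ h₂ => h p hp h₁ h₂ fun w _ => mem_univ w

lemma of_forall_not_adj (hA : ∀ u ∈ A, ∀ v ∈ A, ¬G.Adj u v) (φ : V → ℕ) :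
    IsLRankingOn G ℓ A φ := by
  rintro u v (_ | ⟨huw, q⟩) - h₁ - hpA
  · simp at h₁
  · exact absurd huw (hA _ (hpA _ (by simp)) _ (hpA _ (by simp)))

lemma piecewise [DecidableEq V] {S : Finset V} {ψ φ : V → ℕ} {b : ℕ}
    (h : IsLRankingOn G ℓ (A \ S) φ) (hφ : ∀ v ∈ A \ S, φ v < b) (hψ : ∀ v ∈ S, b ≤ ψ v)
    (hS : ∀ ⦃u v⦄, u ∈ S → v ∈ S → ∀ p : G.Walk u v, p.length ≤ ℓ →
      (∀ w ∈ p.support, w ∈ A) → ψ u = ψ v → u = v) :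
    IsLRankingOn G ℓ A (S.piecewise ψ φ) := by
  intro u v p hp h₁ h₂ hpA
  have hu := hpA u p.start_mem_support
  have hv := hpA v p.end_mem_support
  by_cases huS : u ∈ S <;> by_cases hvS : v ∈ S
  · refine Or.inl fun heq => ?_
    rw [piecewise_eq_of_mem _ _ _ huS, piecewise_eq_of_mem _ _ _ hvS] at heq
    obtain rfl := hS huS hvS p h₂ hpA heq
    simp [Walk.length_eq_zero_iff.mpr (Walk.isPath_iff_nil.mp hp)] at h₁
  · have := hψ u huS
    have := hφ v (mem_sdiff.2 ⟨hv, hvS⟩)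
    rw [piecewise_eq_of_mem _ _ _ huS, piecewise_eq_of_notMem _ _ _ hvS]
    omega
  · have := hψ v hvS
    have := hφ u (mem_sdiff.2 ⟨hu, huS⟩)
    rw [piecewise_eq_of_notMem _ _ _ huS, piecewise_eq_of_mem _ _ _ hvS]
    omega
  · rw [piecewise_eq_of_notMem _ _ _ huS, piecewise_eq_of_notMem _ _ _ hvS]
    by_cases hpS : ∃ w ∈ p.support, w ∈ S
    · obtain ⟨w, hwp, hwS⟩ := hpS
      have := hψ w hwS
      have := hφ u (mem_sdiff.2 ⟨hu, huS⟩)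
      exact Or.inr ⟨w, hwp, by rw [piecewise_eq_of_mem _ _ _ hwS]; omega⟩
    · push Not at hpS
      refine (h p hp h₁ h₂ fun w hw => mem_sdiff.2 ⟨hpA w hw, hpS w hw⟩).imp id ?_
      rintro ⟨w, hwp, hlt⟩
      exact ⟨w, hwp, by rwa [piecewise_eq_of_notMem _ _ _ (hpS w hwp)]⟩

end IsLRankingOn

structure IntervalFamily (V : Type*) where
  left : V → ℕ
  right : V → ℕ
  left_le_right : ∀ v, left v ≤ right v

namespace IntervalFamily

variable (I : IntervalFamily V)

def Overlaps (G : SimpleGraph V) : Prop :=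
  ∀ ⦃u v⦄, G.Adj u v → I.left u ≤ I.right v

def bag (A : Finset V) (x : ℕ) : Finset V :=
  {v ∈ A | I.left v ≤ x ∧ x ≤ I.right v}

/-- `s` may extend a chain whose last interval ends just before `y`. -/
def IsNext (A : Finset V) (y : ℕ) (s : V) : Prop :=
  s ∈ A ∧ y ≤ I.right s ∧ (∀ w ∈ A, y ≤ I.left w → I.left s ≤ I.left w) ∧
    ∀ w ∈ A, I.left w < y → I.right w ≤ I.right s

variable {I} {A : Finset V}

lemma mem_bag {x : ℕ} {v : V} : v ∈ I.bag A x ↔ v ∈ A ∧ I.left v ≤ x ∧ x ≤ I.right v :=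
  mem_filter

lemma exists_isNext {y : ℕ} (h : ∃ v ∈ A, y ≤ I.left v) : ∃ s, I.IsNext A y s := by
  obtain ⟨v, hv, hvmin⟩ := ({v ∈ A | y ≤ I.left v}).exists_min_image I.left
    (by simpa [Finset.Nonempty] using h)
  rw [mem_filter] at hv
  obtain ⟨s, hs, hsmax⟩ := ({w ∈ A | I.left w ≤ I.left v}).exists_max_image I.right
    ⟨v, mem_filter.2 ⟨hv.1, le_rfl⟩⟩
  rw [mem_filter] at hs
  refine ⟨s, hs.1, ?_, fun w hw hyw => hs.2.trans (hvmin w (mem_filter.2 ⟨hw, hyw⟩)),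
    fun w hw hwy => hsmax w (mem_filter.2 ⟨hw, by omega⟩)⟩
  calc y ≤ I.left v := hv.2
    _ ≤ I.right v := I.left_le_right v
    _ ≤ I.right s := hsmax v (mem_filter.2 ⟨hv.1, le_rfl⟩)

variable (I) in
open scoped Classical in
noncomputable def next (A : Finset V) (y : ℕ) : Option V :=
  if h : ∃ s, I.IsNext A y s then some h.choose else none

lemma isNext_of_next_eq_some {y : ℕ} {s : V} (h : I.next A y = some s) : I.IsNext A y s := by
  unfold next at h
  split_ifs at h with hex
  exact Option.some_injective _ h ▸ hex.choose_spec

lemma exists_next_eq_some {y : ℕ} (h : ∃ v ∈ A, y ≤ I.left v) : ∃ s, I.next A y = some s :=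
  ⟨_, dif_pos (exists_isNext h)⟩

variable (I) in
noncomputable def chain (A : Finset V) : ℕ → Option V
  | 0 => I.next A 0
  | k + 1 => (chain A k).bind fun s => I.next A (I.right s + 1)

lemma chain_succ_eq_some {k : ℕ} {s' : V} :
    I.chain A (k + 1) = some s' ↔ ∃ s, I.chain A k = some s ∧ I.next A (I.right s + 1) = some s' :=
  Option.bind_eq_some_iff

lemma mem_of_chain_eq_some {k : ℕ} {s : V} (h : I.chain A k = some s) : s ∈ A := by
  cases k with
  | zero => exact (isNext_of_next_eq_some h).1
  | succ k =>
    obtain ⟨_, -, hs⟩ := chain_succ_eq_some.1 h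
    exact (isNext_of_next_eq_some hs).1

lemma right_lt_right_of_chain_succ {k : ℕ} {s s' : V} (hs : I.chain A k = some s)
    (hs' : I.chain A (k + 1) = some s') : I.right s < I.right s' := by
  obtain ⟨t, ht, hnext⟩ := chain_succ_eq_some.1 hs'
  obtain rfl : t = s := Option.some_injective _ (ht.symm.trans hs)
  exact (isNext_of_next_eq_some hnext).2.1

lemma chain_eq_none_of_le {j k : ℕ} (hk : I.chain A k = none) (hkj : k ≤ j) :
    I.chain A j = none := by
  induction j, hkj using Nat.le_induction with
  | base => exact hk
  | succ j _ ih => simp [chain, ih]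

lemma exists_chain_eq_some_of_le {j k : ℕ} {s : V} (hk : I.chain A k = some s) (hjk : j ≤ k) :
    ∃ t, I.chain A j = some t :=
  Option.ne_none_iff_exists'.1 fun hj => by simp [chain_eq_none_of_le hj hjk] at hk

lemma right_lt_right_of_chain {j k : ℕ} {s t : V} (hs : I.chain A j = some s)
    (ht : I.chain A k = some t) (hjk : j < k) : I.right s < I.right t := by
  induction k, hjk using Nat.le_induction generalizing t with
  | base => exact right_lt_right_of_chain_succ hs ht
  | succ k _ ih =>
    obtain ⟨u, hu⟩ := exists_chain_eq_some_of_le ht k.le_succ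
    exact (ih hu).trans (right_lt_right_of_chain_succ hu ht)

lemma le_right_of_chain_eq_some {k : ℕ} {s : V} (hs : I.chain A k = some s) : k ≤ I.right s := by
  cases k with
  | zero => exact Nat.zero_le _
  | succ k =>
    obtain ⟨t, ht⟩ := exists_chain_eq_some_of_le hs k.le_succ
    have := le_right_of_chain_eq_some ht
    have := right_lt_right_of_chain_succ ht hs
    omega

variable (I A) in
lemma exists_chain_eq_none : ∃ k, I.chain A k = none := by
  refine ⟨A.sup I.right + 1, Option.eq_none_iff_forall_ne_some.2 fun s hs => ?_⟩
  have := le_right_of_chain_eq_some hs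
  have := le_sup (f := I.right) (mem_of_chain_eq_some hs)
  omega

variable (I) in
open scoped Classical in
noncomputable def level (A : Finset V) (w : V) : ℕ :=
  Nat.find (p := fun k => ∀ s ∈ I.chain A k, I.right w ≤ I.right s)
    ((exists_chain_eq_none I A).imp fun k hk s hs => by simp [hk] at hs)

lemma level_le {k : ℕ} {w : V} (h : ∀ s ∈ I.chain A k, I.right w ≤ I.right s) :
    I.level A w ≤ k := by
  classical
  exact Nat.find_min' _ h

lemma right_le_right_of_level {w s : V} (hs : I.chain A (I.level A w) = some s) :
    I.right w ≤ I.right s := by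
  classical
  exact Nat.find_spec (p := fun k => ∀ s ∈ I.chain A k, I.right w ≤ I.right s) _ s hs

lemma level_of_chain_eq_some {k : ℕ} {s : V} (hs : I.chain A k = some s) : I.level A s = k := by
  refine le_antisymm (level_le fun t ht => ?_) (not_lt.1 fun hlt => ?_)
  · obtain rfl : s = t := Option.some_injective _ (hs.symm.trans ht)
    exact le_rfl
  · obtain ⟨t, ht⟩ := exists_chain_eq_some_of_le hs hlt.le
    exact (right_le_right_of_level ht).not_gt (right_lt_right_of_chain ht hs hlt)

lemma level_le_level_add_one {u v : V} (hv : v ∈ A) (huv : I.left v ≤ I.right u) :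
    I.level A v ≤ I.level A u + 1 :=
  level_le fun s' hs' => by
    obtain ⟨s, hs, hnext⟩ := chain_succ_eq_some.1 hs'
    have := right_le_right_of_level hs
    exact (isNext_of_next_eq_some hnext).2.2.2 v hv (by omega)

lemma level_le_level_add_length {G : SimpleGraph V} (hG : I.Overlaps G) {u v : V}
    (p : G.Walk u v) (hpA : ∀ w ∈ p.support, w ∈ A) :
    I.level A v ≤ I.level A u + p.length := by
  induction p with
  | nil => simp
  | cons h q ih =>
    have := ih fun w hw => hpA w (List.mem_cons_of_mem _ hw)
    have := level_le_level_add_one (hpA _ (List.mem_cons_of_mem _ q.start_mem_support))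
      (hG h.symm)
    rw [Walk.length_cons]
    omega

variable (I) in
open scoped Classical in
noncomputable def chainSet (A : Finset V) : Finset V :=
  {v ∈ A | ∃ k, I.chain A k = some v}

lemma mem_chainSet {v : V} : v ∈ I.chainSet A ↔ ∃ k, I.chain A k = some v := by
  classical
  simp only [chainSet, mem_filter, and_iff_right_iff_imp]
  exact fun ⟨_, hk⟩ => mem_of_chain_eq_some hk

lemma chain_level_of_mem_chainSet {v : V} (hv : v ∈ I.chainSet A) :
    I.chain A (I.level A v) = some v := by
  obtain ⟨k, hk⟩ := mem_chainSet.1 hv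
  rwa [level_of_chain_eq_some hk]

lemma eq_of_level_mod_eq {G : SimpleGraph V} (hG : I.Overlaps G) {ℓ : ℕ} {u v : V}
    (hu : u ∈ I.chainSet A) (hv : v ∈ I.chainSet A) (p : G.Walk u v) (hpℓ : p.length ≤ ℓ)
    (hpA : ∀ w ∈ p.support, w ∈ A) (hmod : I.level A u % (ℓ + 1) = I.level A v % (ℓ + 1)) :
    u = v := by
  have h₁ := level_le_level_add_length hG p hpA
  have h₂ := level_le_level_add_length hG p.reverse (by simpa using hpA)
  rw [Walk.length_reverse] at h₂
  have hlevel : I.level A u = I.level A v :=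
    Nat.ModEq.eq_of_abs_lt hmod (by rw [abs_sub_lt_iff]; omega)
  have := chain_level_of_mem_chainSet hv
  rw [← hlevel, chain_level_of_mem_chainSet hu] at this
  exact Option.some_injective _ this

lemma exists_bag_ssubset {x : ℕ} {v : V} (hx : ∀ s ∈ I.chainSet A, s ∉ I.bag A x)
    (hv : v ∈ I.bag A x) : ∃ y, I.bag A x ⊂ I.bag A y := by
  classical
  rw [mem_bag] at hv
  obtain ⟨s₀, hs₀⟩ := exists_next_eq_some ⟨v, hv.1, Nat.zero_le _⟩
  obtain ⟨s, hs, hsmax⟩ := ({s ∈ I.chainSet A | I.left s ≤ x}).exists_max_image I.right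
    ⟨s₀, mem_filter.2 ⟨mem_chainSet.2 ⟨0, hs₀⟩,
      ((isNext_of_next_eq_some hs₀).2.2.1 v hv.1 (Nat.zero_le _)).trans hv.2.1⟩⟩
  rw [mem_filter] at hs
  have hsA : s ∈ A := mem_of_chain_eq_some (mem_chainSet.1 hs.1).choose_spec
  have hsx : I.right s < x := not_le.1 fun h => hx s hs.1 (mem_bag.2 ⟨hsA, hs.2, h⟩)
  -- otherwise the chain would continue past `s` with an interval starting before `x`
  have hreach : ∀ w ∈ I.bag A x, I.left w ≤ I.right s := by
    intro w hw
    rw [mem_bag] at hw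
    by_contra! hsw
    obtain ⟨k, hk⟩ := mem_chainSet.1 hs.1
    obtain ⟨s', hs'⟩ := exists_next_eq_some ⟨w, hw.1, hsw⟩
    have hnext := isNext_of_next_eq_some hs'
    have hs'C : s' ∈ {s ∈ I.chainSet A | I.left s ≤ x} :=
      mem_filter.2 ⟨mem_chainSet.2 ⟨k + 1, chain_succ_eq_some.2 ⟨s, hk, hs'⟩⟩,
        (hnext.2.2.1 w hw.1 hsw).trans hw.2.1⟩
    exact (hsmax s' hs'C).not_gt hnext.2.1
  refine ⟨I.right s, ssubset_iff.2 ⟨s, fun h => hx s hs.1 h, insert_subset ?_ fun w hw => ?_⟩⟩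
  · exact mem_bag.2 ⟨hsA, I.left_le_right s, le_rfl⟩
  · have := (mem_bag.1 hw).2.2
    exact mem_bag.2 ⟨(mem_bag.1 hw).1, hreach w hw, by omega⟩

lemma card_bag_sdiff_chainSet_le [DecidableEq V] {t : ℕ} (hA : ∀ x, (I.bag A x).card ≤ t + 2)
    (x : ℕ) : (I.bag (A \ I.chainSet A) x).card ≤ t + 1 := by
  have hsub : I.bag (A \ I.chainSet A) x ⊆ I.bag A x := filter_subset_filter _ sdiff_subset
  by_cases hx : ∃ s ∈ I.chainSet A, s ∈ I.bag A x
  · obtain ⟨s, hsS, hsx⟩ := hx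
    have : I.bag (A \ I.chainSet A) x ⊆ (I.bag A x).erase s := fun w hw =>
      mem_erase.2 ⟨fun h => (mem_sdiff.1 (mem_filter.1 hw).1).2 (h ▸ hsS), hsub hw⟩
    have := card_le_card this
    rw [card_erase_of_mem hsx] at this
    have := hA x
    omega
  · push Not at hx
    obtain hempty | ⟨v, hv⟩ := (I.bag A x).eq_empty_or_nonempty
    · simp [subset_empty.1 (hempty ▸ hsub)]
    · obtain ⟨y, hy⟩ := exists_bag_ssubset hx hv
      have := card_lt_card hy
      have := card_le_card hsub
      have := hA y
      omega

lemma not_adj_of_card_bag_le_one {G : SimpleGraph V} (hG : I.Overlaps G)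
    (hA : ∀ x, (I.bag A x).card ≤ 1) {u v : V} (hu : u ∈ A) (hv : v ∈ A) : ¬G.Adj u v := by
  classical
  intro h
  have hsub : {u, v} ⊆ I.bag A (max (I.left u) (I.left v)) :=
    insert_subset (mem_bag.2 ⟨hu, le_max_left _ _, max_le (I.left_le_right u) (hG h.symm)⟩)
      (singleton_subset_iff.2
        (mem_bag.2 ⟨hv, le_max_right _ _, max_le (hG h) (I.left_le_right v)⟩))
  have := card_le_card hsub
  rw [card_pair h.ne] at this
  have := hA (max (I.left u) (I.left v))
  omega

theorem exists_isLRankingOn [DecidableEq V] {G : SimpleGraph V} (hG : I.Overlaps G) (ℓ : ℕ) :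
    ∀ (t : ℕ) (A : Finset V), (∀ x, (I.bag A x).card ≤ t + 1) →
      ∃ φ : V → ℕ, (∀ v ∈ A, φ v ∈ Icc 1 ((ℓ + 1) * t + 1)) ∧ IsLRankingOn G ℓ A φ
  | 0, A, hA => ⟨fun _ => 1, by simp,
      .of_forall_not_adj (fun _ hu _ hv => not_adj_of_card_bag_le_one hG hA hu hv) _⟩
  | t + 1, A, hA => by
    obtain ⟨φ, hφ, hrank⟩ :=
      exists_isLRankingOn hG ℓ t (A \ I.chainSet A) (card_bag_sdiff_chainSet_le hA)
    have hcolours : (ℓ + 1) * (t + 1) + 1 = (ℓ + 1) * t + 2 + ℓ := by ring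
    refine ⟨(I.chainSet A).piecewise (fun v => (ℓ + 1) * t + 2 + I.level A v % (ℓ + 1)) φ,
      fun v hv => ?_, hrank.piecewise (b := (ℓ + 1) * t + 2) (fun v hv => ?_) (fun v _ => ?_)
        fun u v hu hv p hpℓ hpA heq => eq_of_level_mod_eq hG hu hv p hpℓ hpA (by simpa using heq)⟩
    · rw [mem_Icc, hcolours]
      by_cases hvS : v ∈ I.chainSet A
      · rw [piecewise_eq_of_mem _ _ _ hvS]
        have := Nat.mod_lt (I.level A v) (Nat.add_one_pos ℓ)
        omega
      · rw [piecewise_eq_of_notMem _ _ _ hvS]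
        have := mem_Icc.1 (hφ v (mem_sdiff.2 ⟨hv, hvS⟩))
        omega
    · have := mem_Icc.1 (hφ v hv)
      omega
    · omega

end IntervalFamily

theorem SimpleGraph.Walk.mem_support_of_pathGraph {n : ℕ} {a b c : Fin n}
    (p : (pathGraph n).Walk a b) (hac : a ≤ c) (hcb : c ≤ b) : c ∈ p.support := by
  induction p with
  | nil => simp [le_antisymm hcb hac]
  | @cons a a' b h q ih =>
    obtain rfl | hac := hac.eq_or_lt
    · exact start_mem_support _
    · refine List.mem_cons_of_mem _ (ih ?_ hcb)
      rw [pathGraph_adj] at h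
      rw [Fin.lt_def] at hac
      rw [Fin.le_def]
      omega

theorem Set.ordConnected_of_preconnected_induce_pathGraph {n : ℕ} {s : Set (Fin n)}
    (h : ((pathGraph n).induce s).Preconnected) : s.OrdConnected := by
  refine ⟨fun a ha b hb c hc => ?_⟩
  obtain ⟨p⟩ := h ⟨a, ha⟩ ⟨b, hb⟩
  have := (p.map (Embedding.induce s).toHom).mem_support_of_pathGraph hc.1 hc.2
  obtain ⟨c', -, rfl⟩ := List.mem_map.1 (Walk.support_map _ _ ▸ this)
  exact c'.2

lemma hasPathwidthAtMost_pathwidth [Finite V] (G : SimpleGraph V) :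
    HasPathwidthAtMost G (pathwidth G) :=
  Nat.sInf_mem (s := {t | HasPathwidthAtMost G t}) ⟨Nat.card V, 1,
    ⟨fun _ => Set.univ, fun _ => { preconnected := .of_subsingleton, nonempty := ⟨⟨0, trivial⟩⟩ },
      fun _ _ _ => ⟨0, trivial, trivial⟩⟩,
    fun _ => by simp⟩

namespace TreeDecomp

variable {G : SimpleGraph V} {n : ℕ} (D : TreeDecomp G (pathGraph n))

open scoped Classical in
noncomputable def positions (v : V) : Finset (Fin n) := {x | v ∈ D.bag x}

lemma mem_positions {v : V} {x : Fin n} : x ∈ D.positions v ↔ v ∈ D.bag x := by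
  simp [positions]

lemma positions_nonempty (v : V) : (D.positions v).Nonempty := by
  obtain ⟨x⟩ := (D.subtree v).nonempty
  exact ⟨x, D.mem_positions.2 x.2⟩

noncomputable def toIntervalFamily : IntervalFamily V where
  left v := (D.positions v).min' (D.positions_nonempty v)
  right v := (D.positions v).max' (D.positions_nonempty v)
  left_le_right _ := Fin.le_def.1 (min'_le _ _ (max'_mem ..))

lemma mem_bag_of_le_of_le {v : V} {x : Fin n} (hl : D.toIntervalFamily.left v ≤ x)
    (hr : x ≤ D.toIntervalFamily.right v) : v ∈ D.bag x :=
  (Set.ordConnected_of_preconnected_induce_pathGraph (D.subtree v).preconnected).out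
    (D.mem_positions.1 (min'_mem ..)) (D.mem_positions.1 (max'_mem ..)) ⟨hl, hr⟩

lemma overlaps : D.toIntervalFamily.Overlaps G := by
  intro u v h
  obtain ⟨x, hu, hv⟩ := D.covers h
  exact (Fin.le_def.1 (min'_le _ _ (D.mem_positions.2 hu))).trans
    (Fin.le_def.1 (le_max' _ _ (D.mem_positions.2 hv)))

lemma card_bag_univ_le [Fintype V] {t : ℕ} (hD : ∀ x, (D.bag x).ncard ≤ t + 1) (x : ℕ) :
    (D.toIntervalFamily.bag univ x).card ≤ t + 1 := by
  by_cases hx : x < n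
  · have hsub : (D.toIntervalFamily.bag univ x : Set V) ⊆ D.bag ⟨x, hx⟩ := fun v hv =>
      D.mem_bag_of_le_of_le (IntervalFamily.mem_bag.1 hv).2.1 (IntervalFamily.mem_bag.1 hv).2.2
    rw [← Set.ncard_coe_finset]
    exact (Set.ncard_le_ncard hsub).trans (hD _)
  · have hempty : D.toIntervalFamily.bag univ x = ∅ := eq_empty_of_forall_notMem fun v hv => by
      have := ((D.positions v).max' (D.positions_nonempty v)).isLt
      have := (IntervalFamily.mem_bag.1 hv).2.2
      simp only [toIntervalFamily] at this
      omega
    simp [hempty]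

end TreeDecomp

end

theorem ranking_le_pathwidth_general {V : Type*} [Fintype V] (G : SimpleGraph V) (ℓ : ℕ) :
    rankingNumber G ℓ ≤ (ℓ + 1) * pathwidth G + 1 := by
  classical
  obtain ⟨n, D, hD⟩ := hasPathwidthAtMost_pathwidth G
  obtain ⟨φ, hφ, hrank⟩ :=
    D.toIntervalFamily.exists_isLRankingOn D.overlaps ℓ _ univ (D.card_bag_univ_le hD)
  exact Nat.sInf_le ⟨φ, hrank.isLRanking, fun v => hφ v (mem_univ v)⟩

/-- `χ_ℓ(G) ≤ (ℓ+1)·pw(G) + 1`. -/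
theorem ranking_le_pathwidth {V : Type*} [Fintype V] (G : SimpleGraph V) (ℓ : ℕ)
    (hℓ : 1 ≤ ℓ) :
    rankingNumber G ℓ ≤ (ℓ + 1) * pathwidth G + 1 :=
  ranking_le_pathwidth_general G ℓ
end

section
/- For any path P of n vertices and any integer ℓ ≥ 1, P has an ℓ-ranking using at most ⌈log₂(ℓ+1)⌉ + 1 colours; in particular χ_ℓ(P) ≤ ℓ + 1. -/
open SimpleGraph

/-!
Number the vertices of the path `1, …, n` and give `m` the colour `min (ν₂ m) c + 1`, where
`2 ^ c ≥ ℓ + 1`. Two vertices of equal colour at distance at most `ℓ < 2 ^ c` cannot both be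
multiples of `2 ^ c`, so both have the same `2`-adic valuation `t < c`; then the smaller one
plus `2 ^ t` lies between them and is divisible by `2 ^ (t + 1)`, so it carries a larger colour.
-/

namespace SimpleGraph.pathGraph

variable {n : ℕ}

theorem le_add_length {u v : Fin n} (p : (pathGraph n).Walk u v) : (v : ℕ) ≤ u + p.length := by
  induction p with
  | nil => simp
  | cons h _ ih =>
    rw [pathGraph_adj] at h
    rw [Walk.length_cons]
    omega

theorem mem_support_of_between {u v : Fin n} (p : (pathGraph n).Walk u v) {w : Fin n}
    (hl : min (u : ℕ) v ≤ w) (hr : (w : ℕ) ≤ max (u : ℕ) v) : w ∈ p.support := by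
  induction p with
  | nil =>
    rw [Walk.support_nil, List.mem_singleton]
    exact Fin.ext (by omega)
  | @cons a b c h q ih =>
    rw [pathGraph_adj] at h
    rw [Walk.support_cons, List.mem_cons]
    by_cases hwa : (w : ℕ) = a
    · exact Or.inl (Fin.ext hwa)
    · exact Or.inr (ih (by omega) (by omega))

theorem isLRanking_of_exists_between {ℓ : ℕ} {φ : Fin n → ℕ}
    (h : ∀ x y : Fin n, (x : ℕ) < y → (y : ℕ) ≤ x + ℓ → φ x = φ y →
      ∃ m : Fin n, (x : ℕ) ≤ m ∧ (m : ℕ) ≤ y ∧ φ x < φ m) :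
    IsLRanking (pathGraph n) ℓ φ := by
  intro u v p hp hpos hle
  refine or_iff_not_imp_left.2 fun huv => ?_
  rw [not_not] at huv
  have hne : (u : ℕ) ≠ v := fun he => by
    obtain rfl := Fin.ext he
    rw [Walk.isPath_iff_nil, ← Walk.length_eq_zero_iff] at hp
    omega
  have hvu := le_add_length p
  have huv' := le_add_length p.reverse
  rw [Walk.length_reverse] at huv'
  rcases Nat.lt_or_gt_of_ne hne with hlt | hlt
  · obtain ⟨m, hxm, hmy, hlt⟩ := h u v hlt (by omega) huv
    exact ⟨m, mem_support_of_between p (by omega) (by omega), hlt⟩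
  · obtain ⟨m, hxm, hmy, hlt⟩ := h v u hlt (by omega) huv.symm
    exact ⟨m, mem_support_of_between p (by omega) (by omega), huv ▸ hlt⟩

end SimpleGraph.pathGraph

theorem exists_two_pow_succ_dvd_between {t a b : ℕ} (ha : 2 ^ t ∣ a) (ha' : ¬ 2 ^ (t + 1) ∣ a)
    (hb : 2 ^ t ∣ b) (hab : a < b) : ∃ m, a < m ∧ m ≤ b ∧ 2 ^ (t + 1) ∣ m := by
  obtain ⟨x, rfl⟩ := ha
  obtain ⟨y, rfl⟩ := hb
  have hx : ¬ 2 ∣ x := fun ⟨z, hz⟩ => ha' ⟨z, by rw [hz, pow_succ]; ring⟩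
  have hxy : x < y := lt_of_mul_lt_mul_left hab (Nat.zero_le _)
  obtain ⟨z, hz⟩ : 2 ∣ x + 1 := by omega
  refine ⟨2 ^ t * (x + 1), by nlinarith [Nat.one_le_two_pow (n := t)],
    Nat.mul_le_mul_left _ hxy, ⟨z, by rw [hz, pow_succ]; ring⟩⟩

noncomputable def rulerColour (c m : ℕ) : ℕ :=
  min (padicValNat 2 m) c + 1

theorem rulerColour_mem_Icc (c m : ℕ) : rulerColour c m ∈ Finset.Icc 1 (c + 1) := by
  rw [Finset.mem_Icc, rulerColour]
  omega

theorem exists_rulerColour_lt {c a b : ℕ} (ha : 0 < a) (hab : a < b) (hba : b < a + 2 ^ c)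
    (h : rulerColour c a = rulerColour c b) :
    ∃ m, a < m ∧ m ≤ b ∧ rulerColour c a < rulerColour c m := by
  simp only [rulerColour, add_left_inj] at h ⊢
  set t := padicValNat 2 a
  have hta : 2 ^ t ∣ a := pow_padicValNat_dvd
  by_cases htc : c ≤ t
  · exfalso
    have hcb : c ≤ padicValNat 2 b := by omega
    have hdvd : 2 ^ c ∣ b - a := Nat.dvd_sub
      ((pow_dvd_pow 2 hcb).trans pow_padicValNat_dvd) ((pow_dvd_pow 2 htc).trans hta)
    have := Nat.le_of_dvd (by omega) hdvd
    omega
  · have hvb : padicValNat 2 b = t := by omega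
    obtain ⟨m, ham, hmb, hm⟩ := exists_two_pow_succ_dvd_between hta
      (pow_succ_padicValNat_not_dvd ha.ne') (hvb ▸ pow_padicValNat_dvd) hab
    have hvm : t + 1 ≤ padicValNat 2 m := (padicValNat_dvd_iff_le (by omega)).1 hm
    exact ⟨m, ham, hmb, by omega⟩

theorem isLRanking_pathGraph_rulerColour {n ℓ c : ℕ} (hc : ℓ < 2 ^ c) :
    IsLRanking (pathGraph n) ℓ fun v => rulerColour c (v + 1) := by
  refine pathGraph.isLRanking_of_exists_between fun x y hxy hyx h => ?_
  obtain ⟨m, hxm, hmy, hlt⟩ :=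
    exists_rulerColour_lt (Nat.succ_pos x) (by omega) (by omega) h
  refine ⟨⟨m - 1, by omega⟩, by simp only; omega, by simp only; omega, ?_⟩
  simpa only [Nat.sub_add_cancel (by omega : 1 ≤ m)] using hlt

theorem ranking_of_path_general (n ℓ : ℕ) :
    (∃ φ : Fin n → ℕ, IsLRanking (SimpleGraph.pathGraph n) ℓ φ ∧
        ∀ v, φ v ∈ Finset.Icc 1 (Nat.clog 2 (ℓ + 1) + 1)) ∧
      rankingNumber (SimpleGraph.pathGraph n) ℓ ≤ ℓ + 1 := by
  set c := Nat.clog 2 (ℓ + 1)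
  have hc : ℓ < 2 ^ c := Nat.le_pow_clog one_lt_two _
  have hcℓ : c ≤ ℓ := (Nat.clog_le_iff_le_pow one_lt_two).2 Nat.lt_two_pow_self
  have hrank := isLRanking_pathGraph_rulerColour (n := n) hc
  refine ⟨⟨_, hrank, fun v => rulerColour_mem_Icc c _⟩, Nat.sInf_le ⟨_, hrank, fun v => ?_⟩⟩
  exact Finset.Icc_subset_Icc le_rfl (by omega) (rulerColour_mem_Icc c _)

/-- Any path on `n` vertices has an `ℓ`-ranking using at most `⌈log₂(ℓ+1)⌉ + 1` colours;
in particular `χ_ℓ(P) ≤ ℓ + 1`. -/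
theorem ranking_of_path (n ℓ : ℕ) (hℓ : 1 ≤ ℓ) :
    (∃ φ : Fin n → ℕ, IsLRanking (SimpleGraph.pathGraph n) ℓ φ ∧
        ∀ v, φ v ∈ Finset.Icc 1 (Nat.clog 2 (ℓ + 1) + 1)) ∧
      rankingNumber (SimpleGraph.pathGraph n) ℓ ≤ ℓ + 1 :=
  ranking_of_path_general n ℓ
end

section
/- For any path P of length at least ℓ, the ℓ-th power of K₃ ⊠ P contains a clique of order 3(ℓ+1); consequently χ̄_ℓ(K₃ ⊠ P) = 3(ℓ+1) for such P. -/
open SimpleGraph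

def IsDistColoring {V : Type*} (G : SimpleGraph V) (ℓ : ℕ) (φ : V → ℕ) : Prop :=
  ∀ ⦃u v : V⦄ (p : G.Walk u v), p.IsPath → 1 ≤ p.length → p.length ≤ ℓ → φ u ≠ φ v

noncomputable def distColoringNumber {V : Type*} (G : SimpleGraph V) (ℓ : ℕ) : ℕ :=
  sInf {k | ∃ φ : V → ℕ, IsDistColoring G ℓ φ ∧ ∀ v, φ v ∈ Finset.Icc 1 k}

def strongProd {α β : Type*} (G : SimpleGraph α) (H : SimpleGraph β) :
    SimpleGraph (α × β) where
  Adj x y := x ≠ y ∧ (x.1 = y.1 ∨ G.Adj x.1 y.1) ∧ (x.2 = y.2 ∨ H.Adj x.2 y.2)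
  symm := ⟨by
    rintro x y ⟨hne, h1, h2⟩
    exact ⟨hne.symm, h1.imp Eq.symm (fun h => h.symm), h2.imp Eq.symm (fun h => h.symm)⟩⟩
  loopless := ⟨fun x h => h.1 rfl⟩

/-- The `ℓ`-th power of `G`: vertices at (positive) distance at most `ℓ` are adjacent. -/
def graphPower {V : Type*} (G : SimpleGraph V) (ℓ : ℕ) : SimpleGraph V where
  Adj u v := u ≠ v ∧ ∃ p : G.Walk u v, p.length ≤ ℓ
  symm := ⟨by
    rintro u v ⟨hne, p, hp⟩
    exact ⟨hne.symm, p.reverse, by simpa using hp⟩⟩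
  loopless := ⟨fun u h => h.1 rfl⟩

/-!
A walk in `K₃ ⊠ P` moves by at most one layer of the path per step, and conversely a walk along
the path can change the `K₃`-coordinate freely at every step. Hence the first `ℓ + 1` layers form a
clique of order `3(ℓ + 1)` in the `ℓ`-th power, which bounds `χ̄_ℓ` from below, while colouring
`(a, i)` by the pair `(a, i mod (ℓ + 1))` is a distance-`ℓ` colouring with `3(ℓ + 1)` colours:
two vertices with the same colour lie in layers that differ by a nonzero multiple of `ℓ + 1`.
-/

namespace SimpleGraph

variable {V α β : Type*}

theorem IsDistColoring.ne_of_graphPower_adj {G : SimpleGraph V} {ℓ : ℕ} {φ : V → ℕ}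
    (hφ : IsDistColoring G ℓ φ) {u v : V} (h : (graphPower G ℓ).Adj u v) : φ u ≠ φ v := by
  classical
  obtain ⟨hne, p, hp⟩ := h
  refine hφ p.bypass p.bypass_isPath ?_ (p.length_bypass_le_length.trans hp)
  exact Nat.pos_of_ne_zero fun h0 => hne (p.bypass.eq_of_length_eq_zero h0)

theorem IsNClique.le_of_isDistColoring {G : SimpleGraph V} {ℓ k m : ℕ} {s : Finset V}
    (hs : (graphPower G ℓ).IsNClique k s) {φ : V → ℕ} (hφ : IsDistColoring G ℓ φ)
    (hφm : ∀ v, φ v ∈ Finset.Icc 1 m) : k ≤ m := by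
  have hinj : Set.InjOn φ s := fun u hu v hv huv =>
    by_contra fun hne => hφ.ne_of_graphPower_adj (hs.1 hu hv hne) huv
  simpa [hs.2] using Finset.card_le_card_of_injOn φ (fun v _ => hφm v) hinj

theorem distColoringNumber_eq_of_isNClique {G : SimpleGraph V} {ℓ k : ℕ} {s : Finset V}
    (hs : (graphPower G ℓ).IsNClique k s) {φ : V → ℕ} (hφ : IsDistColoring G ℓ φ)
    (hφk : ∀ v, φ v ∈ Finset.Icc 1 k) : distColoringNumber G ℓ = k :=
  le_antisymm (Nat.sInf_le ⟨φ, hφ, hφk⟩)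
    (le_csInf ⟨k, φ, hφ, hφk⟩ fun _ ⟨_, hψ, hψm⟩ => hs.le_of_isDistColoring hψ hψm)

theorem strongProd_adj_of_adj_right {G : SimpleGraph α} {H : SimpleGraph β} {a b : α}
    (hab : a = b ∨ G.Adj a b) {i j : β} (hij : H.Adj i j) :
    (strongProd G H).Adj (a, i) (b, j) :=
  ⟨fun h => hij.ne (congrArg Prod.snd h), hab, Or.inr hij⟩

def strongProdFibreHom (G : SimpleGraph α) (H : SimpleGraph β) (b : α) :
    H →g strongProd G H where
  toFun i := (b, i)
  map_rel' := strongProd_adj_of_adj_right (Or.inl rfl)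

theorem exists_strongProd_walk_length_eq {G : SimpleGraph α} {H : SimpleGraph β} {a b : α}
    (hab : a = b ∨ G.Adj a b) {i j : β} (p : H.Walk i j) (hp : p.length ≠ 0) :
    ∃ q : (strongProd G H).Walk (a, i) (b, j), q.length = p.length := by
  cases p with
  | nil => exact absurd rfl hp
  | cons h p =>
    exact ⟨.cons (strongProd_adj_of_adj_right hab h) (p.map (strongProdFibreHom G H b)),
      congrArg (· + 1) (p.length_map _)⟩

theorem pathGraph_exists_walk_length_eq {n : ℕ} {i j : Fin n} (hij : i ≤ j) :
    ∃ p : (pathGraph n).Walk i j, p.length = j.val - i.val := by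
  obtain ⟨k, hk⟩ : ∃ k, j.val = i.val + k := ⟨j.val - i.val, by omega⟩
  induction k generalizing j with
  | zero =>
    obtain rfl : j = i := Fin.ext hk
    exact ⟨.nil, by simp⟩
  | succ k ih =>
    let j' : Fin n := ⟨i.val + k, by omega⟩
    obtain ⟨p, hp⟩ := ih (j := j') (Fin.le_def.2 (by simp [j'])) rfl
    have hadj : (pathGraph n).Adj j' j := by simp only [pathGraph_adj, j', hk]; omega
    exact ⟨p.concat hadj, by simp [hp, j', hk]⟩

theorem strongProd_pathGraph_abs_sub_le_length {G : SimpleGraph α} {n : ℕ}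
    {u v : α × Fin n} (p : (strongProd G (pathGraph n)).Walk u v) :
    |(v.2.val : ℤ) - u.2.val| ≤ p.length := by
  induction p with
  | nil => simp
  | cons h p ih =>
    rw [Walk.length_cons]
    obtain ⟨-, -, h2 | h2⟩ := h
    · rw [h2]; push_cast; linarith
    · rw [pathGraph_adj] at h2
      rw [abs_le] at ih ⊢
      push_cast
      omega

theorem graphPower_completeGraph_strongProd_pathGraph_adj {n ℓ : ℕ} (hℓ : 1 ≤ ℓ)
    {u v : α × Fin n} (hu : u.2.val ≤ ℓ) (hv : v.2.val ≤ ℓ) (hne : u ≠ v) :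
    (graphPower (strongProd (completeGraph α) (pathGraph n)) ℓ).Adj u v := by
  wlog huv : u.2 ≤ v.2 generalizing u v
  · exact (this hv hu hne.symm (le_of_not_ge huv)).symm
  refine ⟨hne, ?_⟩
  obtain hij | hij := huv.eq_or_lt
  · have hab : (strongProd (completeGraph α) (pathGraph n)).Adj u v :=
      ⟨hne, Or.inr fun h => hne (Prod.ext h hij), Or.inl hij⟩
    exact ⟨hab.toWalk, by simpa using hℓ⟩
  · obtain ⟨p, hp⟩ := pathGraph_exists_walk_length_eq huv
    obtain ⟨q, hq⟩ := exists_strongProd_walk_length_eq (G := completeGraph α) (em (u.1 = v.1)) p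
      (by rw [hp]; exact Nat.sub_ne_zero_of_lt hij)
    exact ⟨q, by omega⟩

theorem isNClique_graphPower_completeGraph_strongProd_pathGraph [Fintype α] {n ℓ : ℕ}
    (hℓ : 1 ≤ ℓ) (hn : ℓ + 1 ≤ n) :
    (graphPower (strongProd (completeGraph α) (pathGraph n)) ℓ).IsNClique
      (Fintype.card α * (ℓ + 1)) (Finset.univ ×ˢ Finset.univ.map (Fin.castLEEmb hn)) := by
  refine ⟨fun u hu v hv hne => ?_, by simp [Finset.card_product]⟩
  simp only [Finset.coe_product, Finset.coe_univ, Finset.coe_map, Set.mem_prod, Set.mem_univ,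
    true_and, Set.mem_image, Fin.coe_castLEEmb] at hu hv
  obtain ⟨i, hi⟩ := hu
  obtain ⟨j, hj⟩ := hv
  exact graphPower_completeGraph_strongProd_pathGraph_adj hℓ
    (by rw [← hi]; exact Nat.le_of_lt_succ i.2) (by rw [← hj]; exact Nat.le_of_lt_succ j.2) hne

theorem isDistColoring_strongProd_pathGraph {m n : ℕ} (G : SimpleGraph (Fin m)) (ℓ : ℕ) :
    IsDistColoring (strongProd G (pathGraph n)) ℓ
      fun x => (finProdFinEquiv (x.1, Fin.ofNat (ℓ + 1) x.2.val)).val + 1 := by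
  intro u v p hp hlen hlenℓ huv
  obtain ⟨h1, h2⟩ := Prod.ext_iff.1 (finProdFinEquiv.injective (Fin.ext (Nat.succ_injective huv)))
  have hmod : u.2.val ≡ v.2.val [MOD ℓ + 1] := by simpa [Fin.ext_iff, Nat.ModEq] using h2
  have hdist := strongProd_pathGraph_abs_sub_le_length p
  have h2' : u.2 = v.2 := Fin.ext (hmod.eq_of_abs_lt (by push_cast; omega))
  obtain rfl : u = v := Prod.ext h1 h2'
  exact absurd (Walk.isPath_iff_nil.1 hp).length_eq_zero (by omega)

end SimpleGraph

/-- For a path of length at least `ℓ`, the `ℓ`-th power of `K₃ ⊠ P` contains a clique of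
order `3(ℓ+1)`; consequently `χ̄_ℓ(K₃ ⊠ P) = 3(ℓ+1)`. -/
theorem K3_path_power_clique (n ℓ : ℕ) (hℓ : 1 ≤ ℓ) (hn : ℓ + 1 ≤ n) :
    (∃ s : Finset (Fin 3 × Fin n),
        (graphPower (strongProd (completeGraph (Fin 3)) (SimpleGraph.pathGraph n)) ℓ).IsNClique
          (3 * (ℓ + 1)) s) ∧
      distColoringNumber
          (strongProd (completeGraph (Fin 3)) (SimpleGraph.pathGraph n)) ℓ =
        3 * (ℓ + 1) := by
  have hs := isNClique_graphPower_completeGraph_strongProd_pathGraph (α := Fin 3) hℓ hn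
  rw [Fintype.card_fin] at hs
  refine ⟨⟨_, hs⟩, distColoringNumber_eq_of_isNClique hs
    (isDistColoring_strongProd_pathGraph _ ℓ) fun x => ?_⟩
  simp only [Finset.mem_Icc]
  omega
end
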